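/- arXiv:2508.01202 — 8 statements merged into one kernel-verified Lean document; each statement's English description precedes it below -/
import Mathlib

section
/- For k ≥ 2, a polynomial f ∈ Z_{2^k}[x] satisfies f^2 = 1 if and only if the constant coefficient a_0 of f satisfies a_0^2 = 1 in Z_{2^k} and every coefficient of f in degree ≥ 1 lies in {0, 2^{k-1}}. -/
open Polynomial

private lemma map2_zero_iff (P : Polynomial ℤ) :
    P.map (Int.castRingHom (ZMod 2)) = 0 ↔ ∀ n, (2:ℤ) ∣ P.coeff n := by
  constructor
  · intro h n
    have h2 := congrArg (fun q => Polynomial.coeff q n) h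
    simp only [Polynomial.coeff_map, Polynomial.coeff_zero, Int.coe_castRingHom] at h2
    exact_mod_cast (ZMod.intCast_zmod_eq_zero_iff_dvd _ 2).mp h2
  · intro h
    ext n
    simp only [Polynomial.coeff_map, Polynomial.coeff_zero, Int.coe_castRingHom]
    exact_mod_cast (ZMod.intCast_zmod_eq_zero_iff_dvd _ 2).mpr (h n)

private lemma poly_two_eq_zero : (2 : Polynomial (ZMod 2)) = 0 := by
  have h : ((2:ℕ) : Polynomial (ZMod 2)) = Polynomial.C ((2:ℕ) : ZMod 2) :=
    (Polynomial.C_eq_natCast 2).symm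
  have h2 : ((2:ℕ) : ZMod 2) = 0 := by decide
  rw [h2, Polynomial.C_0] at h
  exact_mod_cast h

-- base: all coefficients of F in degree ≥ 1 are even
private lemma base_even (k : ℕ) (hk : 1 ≤ k) (F : Polynomial ℤ)
    (h : ∀ n, (2:ℤ)^k ∣ (F^2 - 1).coeff n) :
    ∀ i, 1 ≤ i → (2:ℤ) ∣ F.coeff i := by
  set q := F.map (Int.castRingHom (ZMod 2)) with hq
  have hmap : (F^2 - 1).map (Int.castRingHom (ZMod 2)) = 0 := by
    rw [map2_zero_iff]
    intro n
    exact dvd_trans (by simpa using pow_dvd_pow (2:ℤ) hk) (h n)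
  have hq2 : q^2 = 1 := by
    have h0 : q ^ 2 - 1 = 0 := by
      rw [hq, ← Polynomial.map_pow, ← Polynomial.map_one (Int.castRingHom (ZMod 2)),
        ← Polynomial.map_sub]
      exact hmap
    rwa [sub_eq_zero] at h0
  have hq1 : q = 1 := by
    have hsq : (q - 1)^2 = 0 := by
      linear_combination hq2 + (1 - q) * poly_two_eq_zero
    have hz := pow_eq_zero_iff (n := 2) (by norm_num) |>.mp hsq
    exact sub_eq_zero.mp hz
  intro i hi
  have := congrArg (fun p => Polynomial.coeff p i) hq1
  simp only [Polynomial.coeff_map, hq, Polynomial.coeff_one] at this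
  rw [if_neg (by omega)] at this
  exact (ZMod.intCast_zmod_eq_zero_iff_dvd _ 2).mp (by exact_mod_cast this)


-- inductive step: upgrade divisibility by 2^j to 2^(j+1)
private lemma step_div (k j : ℕ) (hj : 1 ≤ j) (hjk : j + 1 ≤ k - 1) (F : Polynomial ℤ)
    (h : ∀ n, (2:ℤ)^k ∣ (F^2 - 1).coeff n)
    (ih : ∀ i, 1 ≤ i → (2:ℤ)^j ∣ F.coeff i) :
    ∀ i, 1 ≤ i → (2:ℤ)^(j+1) ∣ F.coeff i := by
  have hk2 : 2 ≤ k := by omega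
  set a : ℤ := F.coeff 0 with ha
  -- a^2 - 1 divisible by 2^k
  have ha2 : (2:ℤ)^k ∣ a^2 - 1 := by
    have h0 := h 0
    have : (F^2 - 1).coeff 0 = a^2 - 1 := by
      have : (F^2).coeff 0 = a^2 := by
        have := map_pow (Polynomial.constantCoeff (R := ℤ)) F 2
        simpa [Polynomial.constantCoeff_apply] using this
      simp [Polynomial.coeff_sub, this]
    rwa [this] at h0
  -- a is odd
  have hodd : Odd a := by
    have h2 : (2:ℤ) ∣ a^2 - 1 :=
      dvd_trans (by simpa using pow_dvd_pow (2:ℤ) (by omega : 1 ≤ k)) ha2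
    have hsq : Odd (a^2) := by
      rcases h2 with ⟨d, hd⟩
      exact ⟨d, by linarith⟩
    rcases Int.even_or_odd a with he | ho
    · exact absurd hsq (Int.not_odd_iff_even.mpr ((Int.even_pow (n := 2)).mpr ⟨he, by norm_num⟩))
    · exact ho
  -- extract G with F - C a = C 2^j * G
  have hdvd : Polynomial.C ((2:ℤ)^j) ∣ F - Polynomial.C a := by
    rw [Polynomial.C_dvd_iff_dvd_coeff]
    intro i
    rcases Nat.eq_zero_or_pos i with h0 | h1
    · subst h0
      rw [Polynomial.coeff_sub, Polynomial.coeff_C, if_pos rfl, ← ha, sub_self]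
      exact dvd_zero _
    · have hco : (F - Polynomial.C a).coeff i = F.coeff i := by
        rw [Polynomial.coeff_sub, Polynomial.coeff_C, if_neg (by omega), sub_zero]
      rw [hco]; exact ih i h1
  obtain ⟨G, hG⟩ := hdvd
  have h2j : ((2:ℤ)^j) ≠ 0 := pow_ne_zero _ two_ne_zero
  have hG0 : G.coeff 0 = 0 := by
    have h0 : (F - Polynomial.C a).coeff 0 = (Polynomial.C ((2:ℤ)^j) * G).coeff 0 := by
      rw [hG]
    rw [Polynomial.coeff_sub, Polynomial.coeff_C, if_pos rfl, ← ha, sub_self,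
      Polynomial.coeff_C_mul] at h0
    rcases mul_eq_zero.mp h0.symm with h' | h'
    · exact absurd h' h2j
    · exact h'
  obtain ⟨m, rfl⟩ : ∃ m, j = m + 1 := ⟨j - 1, by omega⟩
  set H : Polynomial ℤ := G * (Polynomial.C a + Polynomial.C ((2:ℤ)^m) * G) with hH
  have hF : F = Polynomial.C a + Polynomial.C ((2:ℤ)^(m+1)) * G := by
    linear_combination hG
  have hFid : F^2 - 1 = Polynomial.C (a^2 - 1) + Polynomial.C ((2:ℤ)^(m+2)) * H := by
    have e1 : Polynomial.C ((2:ℤ)^(m+1)) = Polynomial.C (2:ℤ) ^ (m+1) := by rw [map_pow]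
    have e2 : Polynomial.C ((2:ℤ)^(m+2)) = Polynomial.C (2:ℤ) ^ (m+2) := by rw [map_pow]
    have e3 : Polynomial.C ((2:ℤ)^m) = Polynomial.C (2:ℤ) ^ m := by rw [map_pow]
    have e4 : Polynomial.C (a^2 - 1) = Polynomial.C a ^ 2 - 1 := by
      rw [map_sub, map_pow, map_one]
    have e5 : Polynomial.C (2:ℤ) = 2 := by norm_num
    rw [hH, hF, e1, e2, e3, e4, e5]; ring
  have hHdvd : ∀ n, (2:ℤ) ∣ H.coeff n := by
    intro n
    have hn := h n
    rw [hFid, Polynomial.coeff_add, Polynomial.coeff_C_mul] at hn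
    have hCn : (2:ℤ)^k ∣ (Polynomial.C (a^2-1)).coeff n := by
      rw [Polynomial.coeff_C]
      split
      · exact ha2
      · exact dvd_zero _
    have h5 : (2:ℤ)^k ∣ 2^(m+2) * H.coeff n := (dvd_add_right hCn).mp hn
    have hk' : (2:ℤ)^k = 2^(m+2) * 2^(k-(m+2)) := by rw [← pow_add]; congr 1; omega
    rw [hk'] at h5
    have h6 : (2:ℤ)^(k-(m+2)) ∣ H.coeff n :=
      (mul_dvd_mul_iff_left (pow_ne_zero (m+2) (two_ne_zero (α := ℤ)))).mp h5
    exact dvd_trans (by simpa using pow_dvd_pow (2:ℤ) (by omega : 1 ≤ k - (m+2))) h6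
  have hHmap := (map2_zero_iff H).mpr hHdvd
  rw [hH, Polynomial.map_mul] at hHmap
  have hg : G.map (Int.castRingHom (ZMod 2)) = 0 := by
    rcases mul_eq_zero.mp hHmap with hg | hfac
    · exact hg
    · exfalso
      have hc0 : (Polynomial.C a + Polynomial.C ((2:ℤ)^m) * G).coeff 0 = a := by
        rw [Polynomial.coeff_add, Polynomial.coeff_C, if_pos rfl, Polynomial.coeff_C_mul,
          hG0, mul_zero, add_zero]
      have hcc : ((Polynomial.C a + Polynomial.C ((2:ℤ)^m) * G).map
          (Int.castRingHom (ZMod 2))).coeff 0 = 0 := by rw [hfac]; rfl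
      rw [Polynomial.coeff_map, hc0] at hcc
      have h2a : (2:ℤ) ∣ a := by
        exact_mod_cast (ZMod.intCast_zmod_eq_zero_iff_dvd a 2).mp (by exact_mod_cast hcc)
      rcases hodd with ⟨t, ht⟩
      omega
  intro i hi
  have hco : (F - Polynomial.C a).coeff i = (Polynomial.C ((2:ℤ)^(m+1)) * G).coeff i := by
    rw [hG]
  rw [Polynomial.coeff_sub, Polynomial.coeff_C, if_neg (by omega), sub_zero,
    Polynomial.coeff_C_mul] at hco
  obtain ⟨w, hw⟩ := (map2_zero_iff G).mp hg i
  exact ⟨w, by rw [hco, hw]; ring⟩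

private lemma key_int (k : ℕ) (hk : 2 ≤ k) (F : Polynomial ℤ) :
    (∀ n, (2:ℤ)^k ∣ (F^2 - 1).coeff n) ↔
      ((2:ℤ)^k ∣ (F.coeff 0)^2 - 1 ∧ ∀ i, 1 ≤ i → (2:ℤ)^(k-1) ∣ F.coeff i) := by
  have hc0 : (F^2 - 1).coeff 0 = (F.coeff 0)^2 - 1 := by
    have hp : (F^2).coeff 0 = (F.coeff 0)^2 := by
      simpa [Polynomial.constantCoeff_apply] using
        map_pow (Polynomial.constantCoeff (R := ℤ)) F 2
    simp [Polynomial.coeff_sub, hp]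
  constructor
  · intro h
    refine ⟨by rw [← hc0]; exact h 0, ?_⟩
    have main : ∀ j, 1 ≤ j → j ≤ k - 1 → ∀ i, 1 ≤ i → (2:ℤ)^j ∣ F.coeff i := by
      intro j
      induction j with
      | zero => omega
      | succ n ihn =>
        intro _ hle i hi
        rcases Nat.eq_zero_or_pos n with rfl | hn
        · simpa using base_even k (by omega) F h i hi
        · exact step_div k n hn (by omega) F h (fun i' hi' => ihn hn (by omega) i' hi') i hi
    exact main (k-1) (by omega) (le_refl _)
  · rintro ⟨h1, h2⟩ n
    obtain ⟨p, rfl⟩ : ∃ p, k = p + 2 := ⟨k - 2, by omega⟩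
    have h2 : ∀ i, 1 ≤ i → (2:ℤ)^(p+1) ∣ F.coeff i := by
      intro i hi
      have := h2 i hi
      rwa [show p + 2 - 1 = p + 1 by omega] at this
    set a : ℤ := F.coeff 0 with ha
    have hdvd : Polynomial.C ((2:ℤ)^(p+1)) ∣ F - Polynomial.C a := by
      rw [Polynomial.C_dvd_iff_dvd_coeff]
      intro i
      rcases Nat.eq_zero_or_pos i with h0 | hone
      · subst h0
        rw [Polynomial.coeff_sub, Polynomial.coeff_C, if_pos rfl, ← ha, sub_self]
        exact dvd_zero _
      · have hco : (F - Polynomial.C a).coeff i = F.coeff i := by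
          rw [Polynomial.coeff_sub, Polynomial.coeff_C, if_neg (by omega), sub_zero]
        rw [hco]; exact h2 i hone
    obtain ⟨G, hG⟩ := hdvd
    have hF : F = Polynomial.C a + Polynomial.C ((2:ℤ)^(p+1)) * G := by
      linear_combination hG
    have hFid : F^2 - 1 = Polynomial.C (a^2 - 1) +
        Polynomial.C ((2:ℤ)^(p+2)) * (Polynomial.C a * G + Polynomial.C ((2:ℤ)^p) * G^2) := by
      have e1 : Polynomial.C ((2:ℤ)^(p+1)) = Polynomial.C (2:ℤ) ^ (p+1) := by rw [map_pow]
      have e2 : Polynomial.C ((2:ℤ)^(p+2)) = Polynomial.C (2:ℤ) ^ (p+2) := by rw [map_pow]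
      have e3 : Polynomial.C ((2:ℤ)^p) = Polynomial.C (2:ℤ) ^ p := by rw [map_pow]
      have e4 : Polynomial.C (a^2 - 1) = Polynomial.C a ^ 2 - 1 := by
        rw [map_sub, map_pow, map_one]
      have e5 : Polynomial.C (2:ℤ) = 2 := by norm_num
      rw [hF, e1, e2, e3, e4, e5]; ring
    rw [hFid, Polynomial.coeff_add, Polynomial.coeff_C_mul]
    refine dvd_add ?_ (Dvd.dvd.mul_right (dvd_refl _) _)
    rw [Polynomial.coeff_C]
    split
    · exact h1
    · exact dvd_zero _

private lemma cast_two_pow_iff (k : ℕ) (hk : 2 ≤ k) (m : ℤ) :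
    ((m : ZMod (2^k)) = 0 ∨ (m : ZMod (2^k)) = 2^(k-1)) ↔ (2:ℤ)^(k-1) ∣ m := by
  obtain ⟨p, rfl⟩ : ∃ p, k = p + 1 := ⟨k - 1, by omega⟩
  simp only [Nat.add_sub_cancel]
  constructor
  · rintro (h | h)
    · have h2 : (2:ℤ)^(p+1) ∣ m := by
        exact_mod_cast (ZMod.intCast_zmod_eq_zero_iff_dvd m (2^(p+1))).mp h
      exact dvd_trans (pow_dvd_pow 2 (by omega)) h2
    · have hz : ((m - 2^p : ℤ) : ZMod (2^(p+1))) = 0 := by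
        push_cast
        rw [h]; ring
      have h2 : (2:ℤ)^(p+1) ∣ m - 2^p := by
        exact_mod_cast (ZMod.intCast_zmod_eq_zero_iff_dvd _ (2^(p+1))).mp hz
      obtain ⟨c, hc⟩ := h2
      exact ⟨2*c + 1, by linear_combination hc⟩
  · rintro ⟨t, rfl⟩
    rcases Int.even_or_odd t with ⟨s, hs⟩ | ⟨s, hs⟩
    · left
      apply (ZMod.intCast_zmod_eq_zero_iff_dvd _ _).mpr
      have : ((2^(p+1) : ℕ) : ℤ) ∣ 2^p * t := by
        push_cast
        exact ⟨s, by rw [hs]; ring⟩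
      exact this
    · right
      have he : ((2:ℤ)^p * t : ℤ) = 2^(p+1) * s + 2^p := by rw [hs]; ring
      rw [he]
      push_cast
      have hzero : ((2:ZMod (2^(p+1))))^(p+1) = 0 := by
        have := ZMod.natCast_self (2^(p+1))
        push_cast at this
        exact this
      rw [hzero]; ring

theorem poly_zmod_two_pow_involutions (k : ℕ) (hk : 2 ≤ k)
    (f : Polynomial (ZMod (2^k))) :
    f^2 = 1 ↔ (f.coeff 0)^2 = 1 ∧ ∀ i, 1 ≤ i → f.coeff i = 0 ∨ f.coeff i = 2^(k-1) := by
  obtain ⟨F, hF⟩ := Polynomial.map_surjective (Int.castRingHom (ZMod (2^k)))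
    ZMod.intCast_surjective f
  subst hF
  set φ := Int.castRingHom (ZMod (2^k)) with hφ
  have hL : (F.map φ)^2 = 1 ↔ ∀ n, (2:ℤ)^k ∣ (F^2 - 1).coeff n := by
    constructor
    · intro hone n
      have hmap0 : (F^2 - 1).map φ = 0 := by
        rw [Polynomial.map_sub, Polynomial.map_one, Polynomial.map_pow, hone, sub_self]
      have hc := congrArg (fun p => Polynomial.coeff p n) hmap0
      simp only [Polynomial.coeff_map, Polynomial.coeff_zero] at hc
      have := (ZMod.intCast_zmod_eq_zero_iff_dvd _ (2^k)).mp (by exact_mod_cast hc)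
      exact_mod_cast this
    · intro hdvd
      have hmap0 : (F^2 - 1).map φ = 0 := by
        ext n
        simp only [Polynomial.coeff_map, Polynomial.coeff_zero]
        have : ((2^k : ℕ) : ℤ) ∣ (F^2 - 1).coeff n := by exact_mod_cast hdvd n
        exact_mod_cast (ZMod.intCast_zmod_eq_zero_iff_dvd _ (2^k)).mpr this
      rw [Polynomial.map_sub, Polynomial.map_one, Polynomial.map_pow, sub_eq_zero] at hmap0
      exact hmap0
  have hR0 : ((F.map φ).coeff 0)^2 = 1 ↔ (2:ℤ)^k ∣ (F.coeff 0)^2 - 1 := by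
    rw [Polynomial.coeff_map, eq_intCast φ]
    constructor
    · intro h
      have hz : (((F.coeff 0)^2 - 1 : ℤ) : ZMod (2^k)) = 0 := by
        push_cast
        rw [sub_eq_zero]
        exact_mod_cast h
      have := (ZMod.intCast_zmod_eq_zero_iff_dvd _ (2^k)).mp hz
      exact_mod_cast this
    · intro h
      have hz : (((F.coeff 0)^2 - 1 : ℤ) : ZMod (2^k)) = 0 := by
        apply (ZMod.intCast_zmod_eq_zero_iff_dvd _ (2^k)).mpr
        exact_mod_cast h
      push_cast at hz
      rw [sub_eq_zero] at hz
      exact_mod_cast hz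
  rw [hL, key_int k hk F]
  refine and_congr hR0.symm (forall_congr' fun i => imp_congr_right fun hi => ?_)
  rw [Polynomial.coeff_map, eq_intCast φ]
  exact (cast_two_pow_iff k hk (F.coeff i)).symm
end

section
/- For k ≥ 2, a power series f ∈ Z_{2^k}[[x]] satisfies f^2 = 1 if and only if its constant coefficient squares to 1 and every coefficient in degree ≥ 1 lies in {0, 2^{k-1}}. -/
/-!
Write `f = X * g + C a`, so that `f ^ 2 - 1 = C (a ^ 2 - 1) + X * (2 * C a * g + X * g ^ 2)`.
What makes this work is that products of 2-torsion elements of the coefficients vanish; in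
`ZMod (2 ^ k)` with `k ≥ 2` the 2-torsion is `{0, 2 ^ (k - 1)}` and `2 ^ (k - 1) * 2 ^ (k - 1) = 0`.
If the coefficients of `g` are 2-torsion then `2 * g = 0` and `g ^ 2 = 0`, so `f ^ 2 = C (a ^ 2)`.
Conversely, if `f ^ 2 = 1` then `a ^ 2 = 1` and `2 * g = - C a * X * g ^ 2`; the coefficient of
`X ^ n` on the right only involves coefficients of `g` of degree `< n`, so induction on `n` shows
that all of them are 2-torsion.
-/

theorem ZMod.two_mul_eq_zero_iff {n m : ℕ} (hm : m ≠ 0) (hn : n = 2 * m) (x : ZMod n) :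
    2 * x = 0 ↔ x = 0 ∨ x = m := by
  subst hn
  have : NeZero (2 * m) := ⟨by omega⟩
  obtain ⟨v, hv, rfl⟩ : ∃ v < 2 * m, (v : ZMod (2 * m)) = x :=
    ⟨x.val, x.val_lt, x.natCast_zmod_val⟩
  rw [show 2 * (v : ZMod (2 * m)) = ((2 * v : ℕ) : ZMod (2 * m)) by push_cast; rfl,
    ZMod.natCast_eq_zero_iff, Nat.mul_dvd_mul_iff_left two_pos, ZMod.natCast_eq_zero_iff,
    ZMod.natCast_eq_natCast_iff', Nat.mod_eq_of_lt hv, Nat.mod_eq_of_lt (by omega : m < 2 * m)]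
  constructor
  · rintro ⟨c, rfl⟩
    have hc : c < 2 := by nlinarith
    interval_cases c <;> simp
  · rintro (⟨c, rfl⟩ | rfl)
    · have hc : c = 0 := by nlinarith
      simp [hc]
    · exact dvd_rfl

theorem ZMod.two_mul_eq_zero_iff_two_pow {k : ℕ} (hk : 1 ≤ k) (x : ZMod (2 ^ k)) :
    2 * x = 0 ↔ x = 0 ∨ x = 2 ^ (k - 1) := by
  rw [ZMod.two_mul_eq_zero_iff (m := 2 ^ (k - 1)) (by positivity)
    (by rw [← pow_succ']; congr; omega)]
  push_cast; rfl

theorem ZMod.mul_eq_zero_of_two_mul_eq_zero {k : ℕ} (hk : 2 ≤ k) {x y : ZMod (2 ^ k)}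
    (hx : 2 * x = 0) (hy : 2 * y = 0) : x * y = 0 := by
  obtain ⟨j, rfl⟩ : ∃ j, k = j + 2 := ⟨k - 2, by omega⟩
  rcases (ZMod.two_mul_eq_zero_iff_two_pow (by omega) x).1 hx with rfl | rfl
  · exact zero_mul y
  · calc (2 : ZMod (2 ^ (j + 2))) ^ (j + 2 - 1) * y = 2 ^ j * (2 * y) := by
          rw [show j + 2 - 1 = j + 1 by omega]; ring
      _ = 0 := by rw [hy, mul_zero]

namespace PowerSeries

variable {R : Type*} [CommRing R]

theorem coeff_mul_eq_zero_of_two_mul_coeff_eq_zero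
    (h2 : ∀ x y : R, 2 * x = 0 → 2 * y = 0 → x * y = 0) {g h : R⟦X⟧} {n : ℕ}
    (hg : ∀ i ≤ n, 2 * coeff i g = 0) (hh : ∀ i ≤ n, 2 * coeff i h = 0) :
    coeff n (g * h) = 0 := by
  rw [coeff_mul]
  refine Finset.sum_eq_zero fun p hp => h2 _ _ (hg _ ?_) (hh _ ?_)
  · exact Finset.HasAntidiagonal.antidiagonal.fst_le hp
  · exact Finset.HasAntidiagonal.antidiagonal.snd_le hp

theorem coeff_two_mul (n : ℕ) (g : R⟦X⟧) : coeff n (2 * g) = 2 * coeff n g := by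
  rw [← map_ofNat C 2, coeff_C_mul]

theorem sq_eq_one_iff_of_two_torsion_mul_eq_zero
    (h2 : ∀ x y : R, 2 * x = 0 → 2 * y = 0 → x * y = 0) (f : R⟦X⟧) :
    f ^ 2 = 1 ↔ coeff 0 f ^ 2 = 1 ∧ ∀ i, 1 ≤ i → 2 * coeff i f = 0 := by
  set a := constantCoeff f
  set g : R⟦X⟧ := mk fun p => coeff (p + 1) f
  have hf : f = X * g + C a := eq_X_mul_shift_add_const f
  have hshift : (∀ i, 1 ≤ i → 2 * coeff i f = 0) ↔ ∀ i, 2 * coeff i g = 0 :=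
    ⟨fun h i => by simpa [g] using h (i + 1) (by omega),
      fun h i hi => by simpa [g, Nat.sub_add_cancel hi] using h (i - 1)⟩
  rw [coeff_zero_eq_constantCoeff_apply, hshift]
  constructor
  · intro hsq
    have ha : a ^ 2 = 1 := by simpa using congr_arg constantCoeff hsq
    have hCa : C a ^ 2 = 1 := by rw [← map_pow, ha, map_one]
    rw [hf] at hsq
    -- as `C a ^ 2 = 1`, `C a * (f ^ 2 - 1) = X * (2 * g + C a * (X * g ^ 2))`
    have hg : 2 * g + C a * (X * g ^ 2) = 0 :=
      X_mul_cancel (by linear_combination C a * hsq - (2 * X * g + C a) * hCa)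
    refine ⟨ha, fun n => ?_⟩
    induction n using Nat.strong_induction_on with
    | _ n ih =>
      have hn := congr_arg (coeff n) hg
      rw [map_add, coeff_two_mul, coeff_C_mul, map_zero] at hn
      rcases n with _ | m
      · simpa using hn
      · rw [coeff_succ_X_mul, sq, coeff_mul_eq_zero_of_two_mul_coeff_eq_zero h2
          (fun i hi => ih i (by omega)) (fun i hi => ih i (by omega))] at hn
        simpa using hn
  · rintro ⟨ha, hg⟩
    have h2g : 2 * g = 0 := ext fun n => by rw [coeff_two_mul, hg, map_zero]
    have hgg : g ^ 2 = 0 := ext fun n => by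
      rw [sq, coeff_mul_eq_zero_of_two_mul_coeff_eq_zero h2 (fun i _ => hg i) (fun i _ => hg i),
        map_zero]
    have hCa : C a ^ 2 = 1 := by rw [← map_pow, ha, map_one]
    rw [hf]
    linear_combination X ^ 2 * hgg + X * C a * h2g + hCa

end PowerSeries

theorem powerseries_zmod_two_pow_involutions (k : ℕ) (hk : 2 ≤ k)
    (f : PowerSeries (ZMod (2^k))) :
    f^2 = 1 ↔ (PowerSeries.coeff 0 f)^2 = 1 ∧
      ∀ i, 1 ≤ i → PowerSeries.coeff i f = 0 ∨ PowerSeries.coeff i f = 2^(k-1) := by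
  simp_rw [PowerSeries.sq_eq_one_iff_of_two_torsion_mul_eq_zero
    (fun _ _ => ZMod.mul_eq_zero_of_two_mul_eq_zero hk) f,
    ZMod.two_mul_eq_zero_iff_two_pow (by omega : 1 ≤ k)]
end

section
/- Let n ≥ 2. The set of polynomials f ∈ Z_n[x] with f^2 = 1 has exactly two elements (namely 1 and -1) if and only if n = p^k or n = 2p^k for some odd prime p and positive integer k. -/
open Polynomial

-- square roots of 1 in a domain
lemma sq_eq_one_cases {S : Type*} [CommRing S] [IsDomain S] (x : S) (h : x^2 = 1) :
    x = 1 ∨ x = -1 := by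
  have h2 : (x - 1) * (x + 1) = 0 := by linear_combination h
  rcases mul_eq_zero.mp h2 with h3 | h3
  · exact Or.inl (by linear_combination h3)
  · exact Or.inr (by linear_combination h3)

lemma coeff_dvd_of_map_eq_zero {n q : ℕ} [NeZero n] (hq : q ∣ n) (g : Polynomial (ZMod n))
    (h : g.map (ZMod.castHom hq (ZMod q)) = 0) (i : ℕ) : q ∣ (g.coeff i).val := by
  have h0 : (ZMod.castHom hq (ZMod q)) (g.coeff i) = 0 := by
    have := congrArg (fun r => Polynomial.coeff r i) h
    simpa using this
  rw [ZMod.castHom_apply, ← ZMod.natCast_val] at h0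
  exact (ZMod.natCast_eq_zero_iff _ q).mp h0

lemma core_helper (p k n : ℕ) (hp : p.Prime) (hodd : Odd p) (hk : 1 ≤ k)
    (hn : n = p^k ∨ n = 2 * p^k) (f : Polynomial (ZMod n)) (hf : f^2 = 1)
    (hpn : p ∣ n)
    (hmap : f.map (ZMod.castHom hpn (ZMod p)) = 1) : f = 1 := by
  have hp3 : 3 ≤ p := by
    have h2 := hp.two_le
    have hne2 : p ≠ 2 := by rintro rfl; exact (by decide : ¬ Odd 2) hodd
    omega
  have hn0 : n ≠ 0 := by rcases hn with rfl | rfl <;> positivity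
  haveI : NeZero n := ⟨hn0⟩
  have hpk3 : 3 ≤ p ^ k := le_trans hp3 (Nat.le_self_pow (by omega) p)
  haveI : Fact (1 < n) := ⟨by rcases hn with rfl | rfl <;> omega⟩
  set g : Polynomial (ZMod n) := f - 1 with hg
  -- p divides all coefficients (valuewise)
  have hpdvd : ∀ i, p ∣ (g.coeff i).val := by
    apply coeff_dvd_of_map_eq_zero hpn
    rw [hg, Polynomial.map_sub, Polynomial.map_one, hmap, sub_self]
  -- if n even, 2 divides all coefficients
  have h2dvd : (2 ∣ n) → ∀ i, 2 ∣ (g.coeff i).val := by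
    intro h2n
    apply coeff_dvd_of_map_eq_zero h2n
    have hmap2 : (f.map (ZMod.castHom h2n (ZMod 2)))^2 = 1 := by
      rw [← Polynomial.map_pow, hf, Polynomial.map_one]
    rcases sq_eq_one_cases _ hmap2 with h | h
    · rw [hg, Polynomial.map_sub, Polynomial.map_one, h, sub_self]
    · rw [hg, Polynomial.map_sub, Polynomial.map_one, h]
      have h2 : (1 : Polynomial (ZMod 2)) + 1 = 0 := by
        rw [← Polynomial.C_1, ← Polynomial.C_add]
        norm_num
        rfl
      have : (-1 : Polynomial (ZMod 2)) = 1 := by linear_combination -h2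
      rw [this, sub_self]
  -- each coefficient is nilpotent
  have hcoeff_cast : ∀ i, (((g.coeff i).val : ℕ) : ZMod n) = g.coeff i := by
    intro i; rw [ZMod.natCast_val, ZMod.cast_id]
  have hnil : IsNilpotent g := by
    rw [Polynomial.isNilpotent_iff]
    intro i
    refine ⟨k, ?_⟩
    have hdvd : n ∣ (g.coeff i).val ^ k := by
      rcases hn with hne | hne
      · exact dvd_trans (dvd_of_eq hne) (pow_dvd_pow_of_dvd (hpdvd i) k)
      · have h2 : 2 ∣ (g.coeff i).val := h2dvd ⟨p^k, hne⟩ i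
        have hcop : Nat.Coprime 2 p := (Nat.coprime_two_left).mpr hodd
        have h2p : 2 * p ∣ (g.coeff i).val := Nat.Coprime.mul_dvd_of_dvd_of_dvd hcop h2 (hpdvd i)
        have : (2*p)^k ∣ (g.coeff i).val ^ k := pow_dvd_pow_of_dvd h2p k
        refine dvd_trans ?_ this
        rw [hne, mul_pow]
        exact mul_dvd_mul (dvd_pow_self 2 (by omega)) dvd_rfl
    rw [← hcoeff_cast i, ← Nat.cast_pow]
    exact (ZMod.natCast_eq_zero_iff _ n).mpr hdvd
  -- key recursion
  have hsq : g^2 = Polynomial.C (-2 : ZMod n) * g := by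
    rw [hg, map_neg, map_ofNat]
    linear_combination hf
  have key : ∀ j, g^(j+1) = Polynomial.C ((-2 : ZMod n)^j) * g := by
    intro j
    induction j with
    | zero => simp
    | succ j ih =>
      rw [pow_succ, ih, mul_assoc, ← sq, hsq, ← mul_assoc, ← map_mul, ← pow_succ]
  obtain ⟨N, hN⟩ := hnil
  have hN0 : N ≠ 0 := by
    intro h; rw [h, pow_zero] at hN
    exact one_ne_zero hN
  obtain ⟨M, rfl⟩ : ∃ M, N = M + 1 := ⟨N - 1, by omega⟩
  rw [key M] at hN
  -- per-coefficient conclusion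
  have hzero : ∀ i, g.coeff i = 0 := by
    intro i
    have hc : (-2 : ZMod n)^M * g.coeff i = 0 := by
      have := congrArg (fun r => Polynomial.coeff r i) hN
      simpa only [Polynomial.coeff_C_mul, Polynomial.coeff_zero] using this
    have hc2 : (2 : ZMod n)^M * g.coeff i = 0 := by
      rcases Nat.even_or_odd M with hM | hM
      · rwa [neg_pow, hM.neg_one_pow, one_mul] at hc
      · rw [neg_pow, hM.neg_one_pow, neg_one_mul, neg_mul, neg_eq_zero] at hc
        exact hc
    have hcast : ((2^M * (g.coeff i).val : ℕ) : ZMod n) = 0 := by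
      push_cast
      rw [hcoeff_cast i]
      exact hc2
    have hdvd : n ∣ 2^M * (g.coeff i).val := (ZMod.natCast_eq_zero_iff _ n).mp hcast
    have hcop2 : Nat.Coprime (p^k) (2^M) :=
      Nat.Coprime.pow k M (Nat.Coprime.symm ((Nat.coprime_two_left).mpr hodd))
    have hfinal : n ∣ (g.coeff i).val := by
      rcases hn with hne | hne
      · refine dvd_trans (dvd_of_eq hne) ?_
        exact Nat.Coprime.dvd_of_dvd_mul_left hcop2 (dvd_trans (dvd_of_eq hne.symm) hdvd)
      · have hpk : p^k ∣ (g.coeff i).val := by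
          apply Nat.Coprime.dvd_of_dvd_mul_left hcop2
          exact dvd_trans (dvd_trans (dvd_mul_left _ 2) (dvd_of_eq hne.symm)) hdvd
        have h2 : 2 ∣ (g.coeff i).val := h2dvd ⟨p^k, hne⟩ i
        refine dvd_trans (dvd_of_eq hne) ?_
        exact Nat.Coprime.mul_dvd_of_dvd_of_dvd
          (Nat.Coprime.pow_right _ ((Nat.coprime_two_left).mpr hodd)) h2 hpk
    rw [← hcoeff_cast i]
    exact (ZMod.natCast_eq_zero_iff _ n).mpr hfinal
  have : g = 0 := Polynomial.ext fun i => by rw [hzero i, Polynomial.coeff_zero]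
  rw [hg] at this
  exact sub_eq_zero.mp this

lemma core_pm (p k n : ℕ) (hp : p.Prime) (hodd : Odd p) (hk : 1 ≤ k)
    (hn : n = p^k ∨ n = 2 * p^k) (f : Polynomial (ZMod n)) (hf : f^2 = 1) :
    f = 1 ∨ f = -1 := by
  have hpn : p ∣ n := by
    rcases hn with rfl | rfl
    · exact dvd_pow_self p (by omega)
    · exact dvd_mul_of_dvd_right (dvd_pow_self p (by omega)) 2
  haveI := Fact.mk hp
  have hmap2 : (f.map (ZMod.castHom hpn (ZMod p)))^2 = 1 := by
    rw [← Polynomial.map_pow, hf, Polynomial.map_one]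
  rcases sq_eq_one_cases _ hmap2 with h | h
  · exact Or.inl (core_helper p k n hp hodd hk hn f hf hpn h)
  · right
    have hneg : (-f) = 1 := by
      apply core_helper p k n hp hodd hk hn (-f) (by linear_combination hf) hpn
      rw [Polynomial.map_neg, h, neg_neg]
    linear_combination -hneg

lemma poly_one_ne_neg_one (n : ℕ) (hn : 3 ≤ n) : (1 : Polynomial (ZMod n)) ≠ -1 := by
  intro h
  have h0 := congrArg (fun q => Polynomial.coeff q 0) h
  simp only [Polynomial.coeff_one_zero, Polynomial.coeff_neg] at h0
  haveI : Fact (2 < n) := ⟨hn⟩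
  exact ZMod.neg_one_ne_one h0.symm

lemma card_ne_two_of_three {α : Type*} {a b c : α} (hab : a ≠ b) (hac : a ≠ c)
    (hbc : b ≠ c) : Nat.card α ≠ 2 := by
  intro h
  obtain ⟨x, y, hxy, hxyuniv⟩ := Nat.card_eq_two_iff.mp h
  have hmem : ∀ z : α, z = x ∨ z = y := by
    intro z
    have : z ∈ ({x, y} : Set α) := by rw [hxyuniv]; trivial
    simpa using this
  rcases hmem a with rfl | rfl <;> rcases hmem b with rfl | rfl <;>
    rcases hmem c with h3 | h3 <;> simp_all

lemma exists_decomp (n : ℕ) (hn : 3 ≤ n) (h4 : ¬ (4 ∣ n))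
    (hform : ¬ ∃ p k, p.Prime ∧ Odd p ∧ 1 ≤ k ∧ (n = p^k ∨ n = 2 * p^k)) :
    ∃ d e, 3 ≤ d ∧ 3 ≤ e ∧ Nat.Coprime d e ∧ n = d * e := by
  have hn0 : n ≠ 0 := by omega
  have hqsplit : 2 ^ (n.factorization 2) * (n / 2 ^ (n.factorization 2)) = n :=
    Nat.ordProj_mul_ordCompl_eq_self n 2
  have hq2 : ¬ 2 ∣ (n / 2 ^ (n.factorization 2)) := Nat.not_dvd_ordCompl Nat.prime_two hn0
  obtain ⟨a, q, hqsplit, hq2⟩ :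
      ∃ a q, 2 ^ a * q = n ∧ ¬ 2 ∣ q := ⟨_, _, hqsplit, hq2⟩
  have hq0 : q ≠ 0 := by rintro rfl; rw [mul_zero] at hqsplit; omega
  have hq1 : q ≠ 1 := by
    rintro rfl
    rw [mul_one] at hqsplit
    have ha2 : 2 ≤ a := by
      by_contra hc
      interval_cases a <;> omega
    exact h4 (hqsplit ▸ pow_dvd_pow 2 ha2)
  have hqne2 : q ≠ 2 := fun h => hq2 (h ▸ dvd_refl q)
  have hq3 : 3 ≤ q := by omega
  have hpp : q.minFac.Prime := Nat.minFac_prime hq1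
  have hpq : q.minFac ∣ q := Nat.minFac_dvd q
  have hqn : q ∣ n := Dvd.intro_left (2 ^ a) hqsplit
  have hpn : q.minFac ∣ n := hpq.trans hqn
  obtain ⟨p, hpp, hpq, hpn⟩ :
      ∃ p, Nat.Prime p ∧ p ∣ q ∧ p ∣ n := ⟨_, hpp, hpq, hpn⟩
  have hpne2 : p ≠ 2 := by rintro rfl; exact hq2 hpq
  have hpodd : Odd p := hpp.odd_of_ne_two hpne2
  have hp3 : 3 ≤ p := by have := hpp.two_le; omega
  have hsplit : p ^ (n.factorization p) * (n / p ^ (n.factorization p)) = n :=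
    Nat.ordProj_mul_ordCompl_eq_self n p
  have hcop : Nat.Coprime p (n / p ^ (n.factorization p)) := Nat.coprime_ordCompl hpp hn0
  have hkpos : 1 ≤ n.factorization p := hpp.factorization_pos_of_dvd hn0 hpn
  obtain ⟨k, e, hkpos, hsplit, hcop⟩ :
      ∃ k e, 1 ≤ k ∧ p ^ k * e = n ∧ Nat.Coprime p e := ⟨_, _, hkpos, hsplit, hcop⟩
  have hd3 : 3 ≤ p ^ k := le_trans hp3 (Nat.le_self_pow (by omega) p)
  have he0 : e ≠ 0 := by rintro rfl; rw [mul_zero] at hsplit; omega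
  have he1 : e ≠ 1 := by
    rintro rfl
    rw [mul_one] at hsplit
    exact hform ⟨p, k, hpp, hpodd, hkpos, Or.inl hsplit.symm⟩
  have he2 : e ≠ 2 := by
    rintro rfl
    exact hform ⟨p, k, hpp, hpodd, hkpos, Or.inr (by rw [← hsplit]; ring)⟩
  exact ⟨p ^ k, e, hd3, by omega, Nat.Coprime.pow_left k hcop, hsplit.symm⟩

lemma card_two_of_form (p k n : ℕ) (hp : p.Prime) (hodd : Odd p) (hk : 1 ≤ k)
    (hn : n = p^k ∨ n = 2 * p^k) :
    Nat.card {f : Polynomial (ZMod n) // f^2 = 1} = 2 := by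
  have hp3 : 3 ≤ p := by
    have := hp.two_le
    have : p ≠ 2 := by rintro rfl; exact (by decide : ¬ Odd 2) hodd
    omega
  have hpk3 : 3 ≤ p ^ k := le_trans hp3 (Nat.le_self_pow (by omega) p)
  have hn3 : 3 ≤ n := by rcases hn with rfl | rfl <;> omega
  rw [Nat.card_eq_two_iff]
  refine ⟨⟨1, one_pow 2⟩, ⟨-1, neg_one_sq⟩, ?_, ?_⟩
  · intro h
    exact poly_one_ne_neg_one n hn3 (congrArg Subtype.val h)
  · ext ⟨f, hf⟩
    simp only [Set.mem_insert_iff, Set.mem_singleton_iff, Set.mem_univ, iff_true]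
    rcases core_pm p k n hp hodd hk hn f hf with h | h
    · exact Or.inl (Subtype.ext h)
    · exact Or.inr (Subtype.ext h)

lemma card_ne_two_n2 : Nat.card {f : Polynomial (ZMod 2) // f^2 = 1} ≠ 2 := by
  intro h
  obtain ⟨x, y, hxy, _⟩ := Nat.card_eq_two_iff.mp h
  haveI := Fact.mk Nat.prime_two
  have hall : ∀ f : Polynomial (ZMod 2), f^2 = 1 → f = 1 := by
    intro f hf
    have h20 : (1 + 1 : Polynomial (ZMod 2)) = 0 := by
      rw [← Polynomial.C_1, ← Polynomial.C_add]
      norm_num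
      rfl
    have h2 : ((f - 1)^2 : Polynomial (ZMod 2)) = 0 := by
      linear_combination hf + (1 - f) * h20
    have := pow_eq_zero_iff (n := 2) (by norm_num) |>.mp h2
    linear_combination this
  exact hxy (Subtype.ext ((hall x x.2).trans (hall y y.2).symm))

lemma card_ne_two_four_dvd (t : ℕ) (ht : 1 ≤ t) :
    Nat.card {f : Polynomial (ZMod (4*t)) // f^2 = 1} ≠ 2 := by
  haveI : NeZero (4*t) := ⟨by omega⟩
  set half : ZMod (4*t) := ((2*t : ℕ) : ZMod (4*t)) with hhalf
  have hhalf_sq : half * half = 0 := by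
    rw [hhalf, ← Nat.cast_mul]
    rw [ZMod.natCast_eq_zero_iff]
    exact ⟨t, by ring⟩
  have hhalf2 : (2 : ZMod (4*t)) * half = 0 := by
    rw [hhalf, show ((2 : ZMod (4*t)) = ((2:ℕ) : ZMod (4*t))) by norm_num, ← Nat.cast_mul]
    rw [ZMod.natCast_eq_zero_iff]
    exact ⟨1, by ring⟩
  have hhalfne : half ≠ 0 := by
    rw [hhalf, Ne, ZMod.natCast_eq_zero_iff]
    intro hdvd
    have := Nat.le_of_dvd (by omega) hdvd
    omega
  set F : Polynomial (ZMod (4*t)) := 1 + Polynomial.C half * Polynomial.X with hF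
  have hFsq : F^2 = 1 := by
    have e1 : Polynomial.C (half * half) = 0 := by rw [hhalf_sq, map_zero]
    have e2 : Polynomial.C ((2 : ZMod (4*t)) * half) = 0 := by rw [hhalf2, map_zero]
    rw [map_mul] at e1
    rw [map_mul, map_ofNat] at e2
    rw [hF]
    linear_combination Polynomial.X^2 * e1 + Polynomial.X * e2
  have hcoeff1 : F.coeff 1 = half := by
    rw [hF]
    simp [Polynomial.coeff_one]
  apply card_ne_two_of_three
    (a := (⟨1, one_pow 2⟩ : {f : Polynomial (ZMod (4*t)) // f^2 = 1}))
    (b := ⟨-1, neg_one_sq⟩) (c := ⟨F, hFsq⟩)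
  · intro h
    exact poly_one_ne_neg_one (4*t) (by omega) (congrArg Subtype.val h)
  · intro h
    have h1 := congrArg (fun q => Polynomial.coeff q 1) (congrArg Subtype.val h)
    simp only at h1
    rw [hcoeff1, Polynomial.coeff_one] at h1
    simp at h1
    exact hhalfne h1.symm
  · intro h
    have h1 := congrArg (fun q => Polynomial.coeff q 1) (congrArg Subtype.val h)
    simp only at h1
    rw [hcoeff1, Polynomial.coeff_neg, Polynomial.coeff_one] at h1
    simp at h1
    exact hhalfne h1.symm

lemma card_ne_two_crt (d e : ℕ) (hd : 3 ≤ d) (he : 3 ≤ e) (hco : Nat.Coprime d e) :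
    Nat.card {f : Polynomial (ZMod (d*e)) // f^2 = 1} ≠ 2 := by
  haveI : Fact (2 < d) := ⟨hd⟩
  haveI : Fact (2 < e) := ⟨he⟩
  set E := ZMod.chineseRemainder hco with hE
  set c : ZMod (d*e) := E.symm (1, -1) with hc
  have hEc : E c = (1, -1) := by rw [hc, RingEquiv.apply_symm_apply]
  have hc2 : c^2 = 1 := by
    apply E.injective
    rw [map_pow, hEc, map_one]
    ext <;> simp
  have hc1 : c ≠ 1 := by
    intro h
    have := congrArg Prod.snd (hEc ▸ congrArg E h)
    simp only [map_one, Prod.snd_one] at this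
    exact ZMod.neg_one_ne_one this
  have hcm1 : c ≠ -1 := by
    intro h
    have h2 := congrArg E h
    rw [hEc, map_neg, map_one] at h2
    have := congrArg Prod.fst h2
    simp only [Prod.fst_neg, Prod.fst_one] at this
    exact ZMod.neg_one_ne_one this.symm
  have hn3 : 3 ≤ d * e := le_trans hd (Nat.le_mul_of_pos_right d (by omega))
  apply card_ne_two_of_three
    (a := (⟨1, one_pow 2⟩ : {f : Polynomial (ZMod (d*e)) // f^2 = 1}))
    (b := ⟨-1, neg_one_sq⟩)
    (c := ⟨Polynomial.C c, by rw [← map_pow, hc2, map_one]⟩)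
  · intro h
    exact poly_one_ne_neg_one (d*e) hn3 (congrArg Subtype.val h)
  · intro h
    have h1 : (1 : Polynomial (ZMod (d*e))) = Polynomial.C c := congrArg Subtype.val h
    rw [← Polynomial.C_1] at h1
    exact hc1 (Polynomial.C_injective h1).symm
  · intro h
    have h1 : (-1 : Polynomial (ZMod (d*e))) = Polynomial.C c := congrArg Subtype.val h
    rw [← Polynomial.C_1, ← map_neg] at h1
    exact hcm1 (Polynomial.C_injective h1).symm

theorem poly_two_involutions_iff (n : ℕ) (hn : 2 ≤ n) :
    Nat.card {f : Polynomial (ZMod n) // f^2 = 1} = 2 ↔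
      ∃ p k, p.Prime ∧ Odd p ∧ 1 ≤ k ∧ (n = p^k ∨ n = 2 * p^k) := by
  constructor
  · intro hcard
    by_contra hform
    rcases eq_or_ne n 2 with rfl | hne2
    · exact card_ne_two_n2 hcard
    rcases Decidable.em (4 ∣ n) with h4 | h4
    · obtain ⟨t, rfl⟩ := h4
      exact card_ne_two_four_dvd t (by omega) hcard
    · have hn3 : 3 ≤ n := by omega
      obtain ⟨d, e, hd, he, hco, rfl⟩ := exists_decomp n hn3 h4 hform
      exact card_ne_two_crt d e hd he hco hcard
  · rintro ⟨p, k, hp, hodd, hk, hnn⟩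
    exact card_two_of_form p k n hp hodd hk hnn
end

section
/- For even n ≥ 2, the involutory Cayley graph of Z_n[x] is bipartite: there is a 2-coloring of Z_n[x] (by whether the constant term lies in 2Z_n) such that whenever (f - g)^2 = 1, f and g receive different colors. -/
lemma zmod2_sq_one : ∀ a : ZMod 2, a ^ 2 = 1 → a = 1 := by decide

lemma zmod2_sub_one : ∀ a b : ZMod 2, a - b = 1 → (a = 1 ↔ b = 1) → False := by decide

theorem poly_cayley_bipartite_of_even (n : ℕ) (hn : 2 ≤ n) (heven : Even n) :
    ∃ c : Polynomial (ZMod n) → Bool,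
      ∀ f g : Polynomial (ZMod n), (f - g)^2 = 1 → c f ≠ c g := by
  obtain ⟨k, hk⟩ := heven
  have hdvd : 2 ∣ n := ⟨k, by omega⟩
  let φ : ZMod n →+* ZMod 2 := ZMod.castHom hdvd (ZMod 2)
  refine ⟨fun f => decide (φ (f.eval 0) = 1), fun f g h => ?_⟩
  have h0 : (f.eval 0 - g.eval 0) ^ 2 = 1 := by
    have := congrArg (Polynomial.eval 0) h
    simpa using this
  have h1 : (φ (f.eval 0) - φ (g.eval 0)) ^ 2 = 1 := by
    have := congrArg φ h0
    simpa [map_sub] using this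
  have h2 := zmod2_sq_one _ h1
  simp only [ne_eq, decide_eq_decide]
  exact fun hiff => zmod2_sub_one _ _ h2 hiff
end

section
/- For any n ≥ 2, the involutory Cayley graph of Z_n[x] is disconnected; in fact the monomials 1, x, x^2, … lie in pairwise distinct connected components, so there are infinitely many connected components. -/
/-- The involutory Cayley graph of a commutative ring: `a ~ b` iff `(a - b)^2 = 1`. -/
def invCayley (R : Type*) [CommRing R] : SimpleGraph R :=
  SimpleGraph.fromRel (fun a b => (a - b)^2 = 1)

lemma invCayley_step {R : Type*} [CommRing R] {a b : R}
    (h : (invCayley R).Adj a b) : (a - b)^2 = 1 := by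
  rcases h with ⟨hne, h | h⟩
  · exact h
  · rw [← neg_sub, neg_pow]; simpa using h

theorem poly_cayley_disconnected (n : ℕ) (hn : 2 ≤ n) :
    (∀ i j : ℕ, i ≠ j →
      ¬ (invCayley (Polynomial (ZMod n))).Reachable (Polynomial.X^i) (Polynomial.X^j)) ∧
    ¬ (invCayley (Polynomial (ZMod n))).Connected := by
  obtain ⟨p, hp, hpd⟩ := (Nat.exists_prime_and_dvd (by omega : n ≠ 1))
  haveI : Fact p.Prime := ⟨hp⟩
  set φ : Polynomial (ZMod n) →+* Polynomial (ZMod p) :=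
    Polynomial.mapRingHom (ZMod.castHom hpd (ZMod p)) with hφ
  -- key: reachable implies the image difference has degree ≤ 0
  have key : ∀ a b : Polynomial (ZMod n),
      (invCayley (Polynomial (ZMod n))).Reachable a b →
      (φ a - φ b).degree ≤ 0 := by
    intro a b hr
    obtain ⟨w⟩ := hr
    induction w with
    | nil => simp
    | @cons u v c hadj w ih =>
      have hstep : (φ u - φ v)^2 = 1 := by
        have := invCayley_step hadj
        have : (φ (u - v))^2 = φ 1 := by rw [← map_pow, this]
        simpa [map_sub] using this
      have h2 : (φ u - φ v - 1) * (φ u - φ v + 1) = 0 := by ring_nf; linear_combination hstep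
      have hd1 : (φ u - φ v).degree ≤ 0 := by
        rcases mul_eq_zero.mp h2 with h | h
        · have : φ u - φ v = 1 := by linear_combination h
          simp [this]
        · have : φ u - φ v = -1 := by linear_combination h
          rw [this]; simp
      have : φ u - φ c = (φ u - φ v) + (φ v - φ c) := by ring
      rw [this]
      exact le_trans (Polynomial.degree_add_le _ _) (max_le hd1 ih)
  have main : ∀ i j : ℕ, i ≠ j →
      ¬ (invCayley (Polynomial (ZMod n))).Reachable (Polynomial.X^i) (Polynomial.X^j) := by
    have core : ∀ i j : ℕ, j < i →
        ¬ (invCayley (Polynomial (ZMod n))).Reachable (Polynomial.X^i) (Polynomial.X^j) := by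
      intro i j hij hr
      have hd := key _ _ hr
      have hφX : ∀ k : ℕ, φ (Polynomial.X ^ k) = Polynomial.X ^ k := by
        intro k; simp [hφ]
      rw [hφX, hφX] at hd
      have hcoeff : (Polynomial.X ^ i - Polynomial.X ^ j : Polynomial (ZMod p)).coeff i = 1 := by
        simp [Polynomial.coeff_X_pow, Nat.ne_of_gt hij]
      have : (Polynomial.X ^ i - Polynomial.X ^ j : Polynomial (ZMod p)).coeff i = 0 :=
        Polynomial.coeff_eq_zero_of_degree_lt
          (lt_of_le_of_lt hd (by exact_mod_cast Nat.pos_of_ne_zero (by omega)))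
      rw [hcoeff] at this
      exact one_ne_zero this
    intro i j hij hr
    rcases lt_or_gt_of_ne hij with h | h
    · exact core j i h hr.symm
    · exact core i j h hr
  refine ⟨main, fun hc => ?_⟩
  exact main 0 1 (by norm_num) (hc.preconnected _ _)
end

section
/- For k ≥ 2 and f, g ∈ Z_{2^k}[x], if f and g are in the same connected component of the involutory Cayley graph of Z_{2^k}[x], then for every i ≥ 1 the difference of the i-th coefficients of f and g is divisible by 2^{k-1} in Z_{2^k}. -/
open Polynomial

theorem ZMod.natCast_dvd_of_natCast_mul_eq_zero {N d n : ℕ} (hN : N = d * n) (hd : d ≠ 0)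
    {x : ZMod N} (hx : (d : ZMod N) * x = 0) : (n : ZMod N) ∣ x := by
  subst hN
  obtain ⟨y, rfl⟩ := ZMod.intCast_surjective x
  have hdvd : ((d * n : ℕ) : ℤ) ∣ d * y := by
    rw [← ZMod.intCast_zmod_eq_zero_iff_dvd]
    push_cast
    exact hx
  push_cast at hdvd
  obtain ⟨c, hc⟩ := (mul_dvd_mul_iff_left (by exact_mod_cast hd : (d : ℤ) ≠ 0)).mp hdvd
  exact ⟨c, by rw [hc]; push_cast; ring⟩

theorem ZMod.two_pow_pred_dvd_of_two_mul_eq_zero {k : ℕ} (hk : 1 ≤ k) {x : ZMod (2 ^ k)}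
    (hx : 2 * x = 0) : (2 ^ (k - 1) : ZMod (2 ^ k)) ∣ x := by
  have hN : 2 ^ k = 2 * 2 ^ (k - 1) := by rw [← pow_succ', Nat.sub_add_cancel hk]
  exact_mod_cast ZMod.natCast_dvd_of_natCast_mul_eq_zero hN two_ne_zero (by exact_mod_cast hx)

theorem ZMod.mul_eq_zero_of_two_mul_eq_zero_s16 {k : ℕ} (hk : 2 ≤ k) {a b : ZMod (2 ^ k)}
    (ha : 2 * a = 0) (hb : 2 * b = 0) : a * b = 0 := by
  obtain ⟨c, rfl⟩ := ZMod.two_pow_pred_dvd_of_two_mul_eq_zero (by omega) ha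
  calc 2 ^ (k - 1) * c * b = 2 ^ (k - 2) * c * (2 * b) := by
        rw [show k - 1 = k - 2 + 1 by omega]; ring
    _ = 0 := by rw [hb, mul_zero]

theorem Polynomial.two_mul_coeff_eq_zero_of_sq_eq_one {R : Type*} [CommRing R]
    (htors : ∀ a b : R, 2 * a = 0 → 2 * b = 0 → a * b = 0) {p : R[X]} (hp : p ^ 2 = 1)
    (i : ℕ) (hi : i ≠ 0) : 2 * p.coeff i = 0 := by
  have hp0 : p.coeff 0 * p.coeff 0 = 1 := by
    simpa [sq, mul_coeff_zero] using congrArg (coeff · 0) hp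
  induction i using Nat.strong_induction_on with
  | _ i ih =>
    have hsq : (p * p).coeff i = p.coeff 0 * p.coeff i + p.coeff i * p.coeff 0 := by
      rw [coeff_mul]
      refine Finset.sum_eq_add_of_mem (0, i) (i, 0) (by simp) (by simp) (by simp [Ne.symm hi]) ?_
      rintro ⟨a, b⟩ hab ⟨ha, hb⟩
      rw [Finset.HasAntidiagonal.mem_antidiagonal] at hab
      dsimp only
      have ha0 : a ≠ 0 := by rintro rfl; simp_all
      have hb0 : b ≠ 0 := by rintro rfl; simp_all
      exact htors _ _ (ih a (by omega) ha0) (ih b (by omega) hb0)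
    rw [← sq, hp, coeff_one, if_neg hi] at hsq
    linear_combination (-2 * p.coeff i) * hp0 - p.coeff 0 * hsq

theorem invCayley_adj_iff {R : Type*} [CommRing R] {a b : R} :
    (invCayley R).Adj a b ↔ a ≠ b ∧ (a - b) ^ 2 = 1 := by
  rw [invCayley, SimpleGraph.fromRel_adj, ← neg_sub b a, neg_sq, or_self]

theorem SimpleGraph.Reachable.sub_mem {G : Type*} [AddGroup G] {Γ : SimpleGraph G}
    {S : AddSubgroup G} (hS : ∀ u v, Γ.Adj u v → u - v ∈ S) {u v : G} (h : Γ.Reachable u v) :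
    u - v ∈ S := by
  obtain ⟨w⟩ := h
  induction w with
  | nil => simp
  | cons huv _ ih => simpa using S.add_mem (hS _ _ huv) ih

theorem two_mul_coeff_sub_eq_zero_of_reachable {R : Type*} [CommRing R]
    (htors : ∀ a b : R, 2 * a = 0 → 2 * b = 0 → a * b = 0) {f g : R[X]}
    (h : (invCayley R[X]).Reachable f g) {i : ℕ} (hi : i ≠ 0) :
    2 * (f.coeff i - g.coeff i) = 0 := by
  let S := ((AddMonoidHom.mulLeft (2 : R)).comp (lcoeff R i).toAddMonoidHom).ker
  have hS : ∀ u v, (invCayley R[X]).Adj u v → u - v ∈ S := fun u v huv => by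
    simpa [S] using two_mul_coeff_eq_zero_of_sq_eq_one htors (invCayley_adj_iff.mp huv).2 i hi
  simpa [S] using h.sub_mem hS

theorem coeff_diff_of_reachable (k : ℕ) (hk : 2 ≤ k)
    (f g : Polynomial (ZMod (2^k)))
    (h : (invCayley (Polynomial (ZMod (2^k)))).Reachable f g) :
    ∀ i, 1 ≤ i → (2^(k-1) : ZMod (2^k)) ∣ (f.coeff i - g.coeff i) := by
  intro i hi
  refine ZMod.two_pow_pred_dvd_of_two_mul_eq_zero (by omega) ?_
  exact two_mul_coeff_sub_eq_zero_of_reachable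
    (fun _ _ => ZMod.mul_eq_zero_of_two_mul_eq_zero_s16 hk) h (by omega)
end

section
/- The involutory Cayley graph of Z_4[x] contains K_{3,3} as a subgraph: every element of A = {0, 2, 2x} is adjacent to every element of 1 + A = {1, 3, 1 + 2x}; hence Γ(Z_4[x]) is not planar. -/
theorem z4_poly_K33 :
    ∀ a ∈ ({0, 2, 2 * Polynomial.X} : Set (Polynomial (ZMod 4))),
      ∀ b ∈ ({1, 3, 1 + 2 * Polynomial.X} : Set (Polynomial (ZMod 4))),
        (a - b)^2 = 1 := by
  have h4 : (4 : Polynomial (ZMod 4)) = 0 := by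
    have := map_ofNat (Polynomial.C : ZMod 4 →+* Polynomial (ZMod 4)) 4
    rw [← this, show (OfNat.ofNat 4 : ZMod 4) = 0 from rfl, map_zero]
  have key : ∀ q : Polynomial (ZMod 4), (1 + 2 * q)^2 = 1 := fun q => by
    linear_combination (q + q ^ 2) * h4
  rintro a (rfl | rfl | rfl) b (rfl | rfl | rfl) <;>
    first
      | linear_combination key 0
      | linear_combination key 1
      | linear_combination key Polynomial.X
      | linear_combination key (-Polynomial.X)
      | linear_combination key (1 - Polynomial.X)
end

section
/- For n ≥ 2 not of the form 2, p^k, or 2p^k (p an odd prime), the girth of the involutory Cayley graph of Z_n[x] is 4: there exist 4-cycles but no 3-cycles. -/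
lemma invCayley_adj {R : Type*} [CommRing R] {a b : R} :
    (invCayley R).Adj a b ↔ a ≠ b ∧ (a - b)^2 = 1 := by
  simp only [invCayley, SimpleGraph.fromRel_adj]
  constructor
  · rintro ⟨h1, h2 | h2⟩
    · exact ⟨h1, h2⟩
    · exact ⟨h1, by rw [show a - b = -(b - a) by ring, neg_sq]; exact h2⟩
  · rintro ⟨h1, h2⟩; exact ⟨h1, Or.inl h2⟩

lemma crt_unit (a b : ℕ) (ha : 3 ≤ a) (hb : 3 ≤ b) (hab : a.Coprime b) :
    ∃ c : ZMod (a*b), c^2 = 1 ∧ c ≠ 1 ∧ c ≠ -1 := by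
  haveI : Fact (2 < a) := ⟨ha⟩
  haveI : Fact (2 < b) := ⟨hb⟩
  let e := ZMod.chineseRemainder hab
  refine ⟨e.symm (1, -1), ?_, ?_, ?_⟩
  · rw [← map_pow]
    have : ((1 : ZMod a), (-1 : ZMod b))^2 = 1 := by
      rw [Prod.pow_def]; norm_num
    rw [this, map_one]
  · intro hc
    have := congrArg e hc
    rw [RingEquiv.apply_symm_apply, map_one, Prod.ext_iff] at this
    exact ZMod.neg_one_ne_one this.2
  · intro hc
    have := congrArg e hc
    rw [RingEquiv.apply_symm_apply, map_neg, map_one, Prod.ext_iff] at this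
    exact ZMod.neg_one_ne_one this.1.symm

lemma exists_sqrt (n : ℕ) (hn : 2 ≤ n) (hn2 : n ≠ 2)
    (h : ¬ ∃ p k, p.Prime ∧ Odd p ∧ 1 ≤ k ∧ (n = p^k ∨ n = 2 * p^k)) :
    ∃ v : Polynomial (ZMod n), v^2 = 1 ∧ v ≠ 1 ∧ v ≠ -1 := by
  haveI : NeZero n := ⟨by omega⟩
  by_cases h4 : 4 ∣ n
  · -- use v = 1 + C (n/2) * X
    obtain ⟨m, hm⟩ := h4
    set c : ZMod n := ((n/2 : ℕ) : ZMod n) with hc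
    have hc0 : c ≠ 0 := by
      rw [hc, Ne, ZMod.natCast_eq_zero_iff]
      intro hd
      have := Nat.le_of_dvd (by omega) hd
      omega
    have h2c : 2 * c = 0 := by
      have h1 : ((2 * (n/2) : ℕ) : ZMod n) = 0 := by
        rw [show 2 * (n/2) = n by omega]; exact ZMod.natCast_self n
      calc 2 * c = ((2 * (n/2) : ℕ) : ZMod n) := by push_cast; ring
        _ = 0 := h1
    have hcc : c * c = 0 := by
      have h1 : ((n/2 * (n/2) : ℕ) : ZMod n) = 0 := by
        rw [ZMod.natCast_eq_zero_iff]
        refine ⟨m, ?_⟩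
        have : n / 2 = 2 * m := by omega
        rw [this, hm]; ring
      calc c * c = ((n/2 * (n/2) : ℕ) : ZMod n) := by push_cast; ring
        _ = 0 := h1
    refine ⟨1 + Polynomial.C c * Polynomial.X, ?_, ?_, ?_⟩
    · have : (1 + Polynomial.C c * Polynomial.X)^2 =
        1 + Polynomial.C (2*c) * Polynomial.X + Polynomial.C (c*c) * Polynomial.X^2 := by
        simp only [map_mul, map_ofNat]
        ring
      rw [this, h2c, hcc]; simp
    · intro hv
      have := congrArg (fun p => Polynomial.coeff p 1) hv
      simp [Polynomial.coeff_one] at this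
      exact hc0 this
    · intro hv
      have := congrArg (fun p => Polynomial.coeff p 1) hv
      simp [Polynomial.coeff_one, Polynomial.coeff_neg] at this
      exact hc0 this
  · -- find odd prime p dividing n
    have hn0 : n ≠ 0 := by omega
    have hoc : 3 ≤ ordCompl[2] n := by
      have hodd : ¬ 2 ∣ ordCompl[2] n := Nat.not_dvd_ordCompl Nat.prime_two hn0
      have hpos : 0 < ordCompl[2] n := Nat.ordCompl_pos 2 hn0
      have htri : ordCompl[2] n = 1 ∨ ordCompl[2] n = 2 ∨ 3 ≤ ordCompl[2] n := by omega
      rcases htri with h1 | h2 | h3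
      · exfalso
        have hself := Nat.ordProj_mul_ordCompl_eq_self n 2
        rw [h1, mul_one] at hself
        rcases Nat.lt_or_ge (n.factorization 2) 2 with hk2 | hk2
        · interval_cases hke : n.factorization 2 <;> simp_all <;> omega
        · refine h4 ?_
          rw [← hself, show (4:ℕ) = 2^2 from rfl]
          exact pow_dvd_pow 2 hk2
      · exact absurd ⟨1, h2.symm ▸ rfl⟩ hodd
      · exact h3
    have hpm : (ordCompl[2] n).minFac.Prime := Nat.minFac_prime (by omega)
    set p := (ordCompl[2] n).minFac with hp
    have hp2 : p ≠ 2 := by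
      intro h2
      have h2d := Nat.minFac_dvd (ordCompl[2] n)
      rw [← hp, h2] at h2d
      exact Nat.not_dvd_ordCompl Nat.prime_two hn0 h2d
    have hpodd : Odd p := hpm.odd_of_ne_two hp2
    have hpn1 : p ∣ ordCompl[2] n := Nat.minFac_dvd _
    have hpn2 : ordCompl[2] n ∣ n := Nat.ordCompl_dvd n 2
    have hpn : p ∣ n := hpn1.trans hpn2
    have hkpos : 0 < n.factorization p := Nat.Prime.factorization_pos_of_dvd hpm hn0 hpn
    have hnab : n = ordProj[p] n * ordCompl[p] n := (Nat.ordProj_mul_ordCompl_eq_self n p).symm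
    have hcop : (ordProj[p] n).Coprime (ordCompl[p] n) :=
      Nat.Coprime.pow_left _ (Nat.coprime_ordCompl hpm hn0)
    have hp3 : 3 ≤ p := by
      have := hpm.two_le
      rcases Nat.lt_or_ge p 3 with hl | hl
      · omega
      · omega
    have ha3 : 3 ≤ ordProj[p] n := by
      have : p ≤ p ^ n.factorization p := Nat.le_self_pow (by omega) p
      omega
    have hb3 : 3 ≤ ordCompl[p] n := by
      have hbpos : 0 < ordCompl[p] n := Nat.ordCompl_pos p hn0
      have htri : ordCompl[p] n = 1 ∨ ordCompl[p] n = 2 ∨ 3 ≤ ordCompl[p] n := by omega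
      rcases htri with h1 | h2 | h3
      · have heq := hnab
        rw [h1, mul_one] at heq
        exact absurd ⟨p, n.factorization p, hpm, hpodd, hkpos, Or.inl heq⟩ h
      · have heq := hnab
        rw [h2] at heq
        rw [Nat.mul_comm] at heq
        exact absurd ⟨p, n.factorization p, hpm, hpodd, hkpos, Or.inr heq⟩ h
      · exact h3
    rw [hnab]
    obtain ⟨c, hc1, hc2, hc3⟩ := crt_unit _ _ ha3 hb3 hcop
    refine ⟨Polynomial.C c, ?_, ?_, ?_⟩
    · rw [← map_pow, hc1, map_one]
    · intro hv
      rw [← Polynomial.C_1] at hv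
      exact hc2 (Polynomial.C_injective hv)
    · intro hv
      rw [show (-1 : Polynomial (ZMod (ordProj[p] n * ordCompl[p] n))) = Polynomial.C (-1) by simp] at hv
      exact hc3 (Polynomial.C_injective hv)

theorem poly_cayley_girth_four (n : ℕ) (hn : 2 ≤ n) (hn2 : n ≠ 2)
    (h : ¬ ∃ p k, p.Prime ∧ Odd p ∧ 1 ≤ k ∧ (n = p^k ∨ n = 2 * p^k)) :
    (invCayley (Polynomial (ZMod n))).girth = 4 := by
  haveI : NeZero n := ⟨by omega⟩
  haveI : Fact (1 < n) := ⟨by omega⟩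
  set R := Polynomial (ZMod n) with hR
  set G := invCayley R with hG
  have hn3 : n ≠ 3 := by
    rintro rfl
    exact h ⟨3, 1, Nat.prime_three, ⟨1, rfl⟩, le_refl 1, Or.inl (by norm_num)⟩
  have h3ne : (3 : R) ≠ 0 := by
    intro h3
    have := congrArg (Polynomial.eval 0) h3
    simp at this
    rw [show (3 : ZMod n) = ((3:ℕ) : ZMod n) by norm_num,
      ZMod.natCast_eq_zero_iff] at this
    rcases (Nat.prime_three.eq_one_or_self_of_dvd n this) with h1 | h1 <;> omega
  -- no triangles
  have htri : ∀ x y z : R, G.Adj x y → G.Adj y z → G.Adj z x → False := by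
    intro x y z hxy hyz hzx
    rw [hG, invCayley_adj] at hxy hyz hzx
    obtain ⟨-, h1⟩ := hxy; obtain ⟨-, h2⟩ := hyz; obtain ⟨-, h3⟩ := hzx
    have hsum : (x - z)^2 = 1 := by
      rw [show x - z = -(z - x) by ring, neg_sq]; exact h3
    have key : 2 * ((x-y)*(y-z)) = -1 := by
      have : (x - z)^2 = (x-y)^2 + 2*((x-y)*(y-z)) + (y-z)^2 := by ring
      rw [h1, h2] at this
      rw [hsum] at this
      linear_combination -this
    have h41 : (4 : R) = 1 := by
      have := congrArg (· ^ 2) key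
      rw [mul_pow, mul_pow, h1, h2, neg_one_sq] at this
      linear_combination this
    exact h3ne (by linear_combination h41)
  obtain ⟨v, hv1, hvne1, hvnem1⟩ := exists_sqrt n hn hn2 h
  have hv0 : v ≠ 0 := by
    intro e; rw [e] at hv1
    simp only [ne_eq, zero_pow, OfNat.ofNat_ne_zero, not_false_eq_true] at hv1
    exact one_ne_zero hv1.symm
  have h10 : (1 : R) ≠ 0 := one_ne_zero
  have hvm1 : (1 : R) + v ≠ 0 := fun e => hvnem1 (by linear_combination e)
  have a1 : G.Adj 0 1 := (hG ▸ invCayley_adj).mpr ⟨fun e => h10 e.symm, by ring⟩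
  have a2 : G.Adj 1 (1 + v) := (hG ▸ invCayley_adj).mpr
    ⟨fun e => hv0 (by linear_combination -e),
      by rw [show (1 : R) - (1 + v) = -v by ring, neg_sq]; exact hv1⟩
  have a3 : G.Adj (1 + v) v := (hG ▸ invCayley_adj).mpr
    ⟨fun e => h10 (by linear_combination e), by ring⟩
  have a4 : G.Adj v 0 := (hG ▸ invCayley_adj).mpr
    ⟨hv0, by rw [sub_zero]; exact hv1⟩
  let w : G.Walk 0 0 :=
    .cons a1 (.cons a2 (.cons a3 (.cons a4 .nil)))
  have hwc : w.IsCycle := by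
    rw [show w = SimpleGraph.Walk.cons a1 (.cons a2 (.cons a3 (.cons a4 .nil))) from rfl]
    rw [SimpleGraph.Walk.cons_isCycle_iff]
    constructor
    · rw [SimpleGraph.Walk.isPath_def]
      simp only [SimpleGraph.Walk.support_cons, SimpleGraph.Walk.support_nil,
        List.nodup_cons, List.mem_cons, List.mem_singleton, List.not_mem_nil,
        List.nodup_nil, and_true, not_or, List.mem_nil_iff, not_false_iff]
      refine ⟨⟨?_, ?_, ?_⟩, ⟨?_, ?_⟩, ?_⟩
      · intro e; exact hv0 (by linear_combination -e)
      · exact fun e => hvne1 e.symm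
      · exact h10
      · intro e; exact h10 (by linear_combination e)
      · exact hvm1
      · exact hv0
    · intro hmem
      simp only [SimpleGraph.Walk.edges_cons, SimpleGraph.Walk.edges_nil, List.mem_cons,
        List.not_mem_nil, or_false, Sym2.eq_iff] at hmem
      rcases hmem with (⟨e1, e2⟩ | ⟨e1, e2⟩) | (⟨e1, e2⟩ | ⟨e1, e2⟩) | (⟨e1, e2⟩ | ⟨e1, e2⟩) <;>
        first
          | exact h10 (by linear_combination e1)
          | exact h10 (by linear_combination -e1)
          | exact h10 (by linear_combination e2)
          | exact h10 (by linear_combination -e2)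
          | exact hv0 (by linear_combination e1)
          | exact hv0 (by linear_combination -e1)
          | exact hv0 (by linear_combination e2)
          | exact hv0 (by linear_combination -e2)
          | exact hvm1 (by linear_combination e1)
          | exact hvm1 (by linear_combination -e1)
          | exact hvm1 (by linear_combination e2)
          | exact hvm1 (by linear_combination -e2)
          | exact hvne1 (by linear_combination e1)
          | exact hvne1 (by linear_combination -e1)
          | exact hvne1 (by linear_combination e2)
          | exact hvne1 (by linear_combination -e2)
  have hwl : w.length = 4 := rfl
  have hle : G.egirth ≤ 4 := by
    calc G.egirth ≤ (w.length : ℕ∞) :=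
          iInf_le_of_le 0 (iInf_le_of_le w (iInf_le_of_le hwc le_rfl))
      _ = 4 := by rw [hwl]; rfl
  have hge : 4 ≤ G.egirth := by
    rw [SimpleGraph.le_egirth]
    intro a p hp
    have h3 := hp.three_le_length
    have hne3 : p.length ≠ 3 := by
      intro hl
      have g01 : G.Adj (p.getVert 0) (p.getVert 1) := p.adj_getVert_succ (by omega)
      have g12 : G.Adj (p.getVert 1) (p.getVert 2) := p.adj_getVert_succ (by omega)
      have g23 : G.Adj (p.getVert 2) (p.getVert 3) := p.adj_getVert_succ (by omega)
      rw [SimpleGraph.Walk.getVert_zero] at g01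
      have hga : p.getVert 3 = a := by
        have := p.getVert_length; rwa [hl] at this
      rw [hga] at g23
      exact htri a (p.getVert 1) (p.getVert 2) g01 g12 g23
    have h4le : 4 ≤ p.length := by omega
    exact_mod_cast h4le
  have hfin : G.egirth = 4 := le_antisymm hle hge
  rw [SimpleGraph.girth, hfin]
  rfl
end
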